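/- Let f(x) = (x, x²) as a map ℝ → ℝ². Then [f(ℝ)]⊕ ∩ (-ℝ²₊) = {0}, where [Y]⊕ := {d ∈ ℝ² : ∃ t_k ≥ 0, yᵏ ∈ Y with t_k → 0 and t_k yᵏ → d}, even though f is not bounded from below (there is no a ∈ ℝ² with f(ℝ) ⊆ a + ℝ²₊). -/
import Mathlib


open Filter

/-- The recession cone of a set `Y ⊆ ℝ²`. -/
def recessionCone (Y : Set (Fin 2 → ℝ)) : Set (Fin 2 → ℝ) :=
  {d | ∃ (t : ℕ → ℝ) (y : ℕ → (Fin 2 → ℝ)),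
    (∀ k, 0 ≤ t k) ∧ (∀ k, y k ∈ Y) ∧
    Tendsto t atTop (nhds 0) ∧ Tendsto (fun k => t k • y k) atTop (nhds d)}

/-- For `f(x) = (x, x²)`, one has `[f(ℝ)]⊕ ∩ (-ℝ²₊) = {0}`, even though
`f` is not bounded from below. -/
theorem recession_example_not_bounded_below :
    (recessionCone (Set.range (fun x : ℝ => ![x, x ^ 2])) ∩ {d | d ≤ 0} = {0}) ∧
    ¬ ∃ a : Fin 2 → ℝ, ∀ x : ℝ, a ≤ ![x, x ^ 2] := by
  constructor
  · ext d
    simp only [Set.mem_inter_iff, Set.mem_setOf_eq, Set.mem_singleton_iff]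
    constructor
    · rintro ⟨⟨t, y, ht0, hy, htt, hts⟩, hd⟩
      choose x hx using hy
      have hy0 : ∀ k, y k 0 = x k := by intro k; rw [← hx k]; simp
      have hy1 : ∀ k, y k 1 = (x k) ^ 2 := by intro k; rw [← hx k]; simp
      have hcomp := tendsto_pi_nhds.mp hts
      have h0 : Tendsto (fun k => t k * x k) atTop (nhds (d 0)) := by
        have := hcomp 0
        simpa [hy0] using this
      have h1 : Tendsto (fun k => t k * (x k) ^ 2) atTop (nhds (d 1)) := by
        have := hcomp 1
        simpa [hy1] using this
      have hd1 : d 1 = 0 := by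
        have hge : 0 ≤ d 1 := by
          refine le_of_tendsto_of_tendsto tendsto_const_nhds h1 ?_
          filter_upwards with k
          exact mul_nonneg (ht0 k) (sq_nonneg _)
        exact le_antisymm (hd 1) hge
      have hd0 : d 0 = 0 := by
        have hsq : Tendsto (fun k => (t k * x k) ^ 2) atTop (nhds ((d 0) ^ 2)) :=
          h0.pow 2
        have hsq' : Tendsto (fun k => t k * (t k * (x k) ^ 2)) atTop (nhds (0 * d 1)) :=
          htt.mul h1
        have heq : (fun k => (t k * x k) ^ 2) = fun k => t k * (t k * (x k) ^ 2) := by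
          funext k; ring
        rw [heq] at hsq
        have : (d 0) ^ 2 = 0 * d 1 := tendsto_nhds_unique hsq hsq'
        have : (d 0) ^ 2 = 0 := by simpa using this
        exact pow_eq_zero_iff (n := 2) (by norm_num) |>.mp this
      funext i
      fin_cases i
      · exact hd0
      · exact hd1
    · rintro rfl
      refine ⟨⟨fun _ => 0, fun _ => ![0, 0 ^ 2], fun _ => le_refl 0,
        fun _ => ⟨0, rfl⟩, tendsto_const_nhds, ?_⟩, le_refl 0⟩
      · simpa using (tendsto_const_nhds : Tendsto (fun _ : ℕ => (0 : Fin 2 → ℝ)) atTop (nhds 0))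
  · rintro ⟨a, ha⟩
    have := ha (a 0 - 1)
    have h0 := this 0
    simp at h0
    linarith
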